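/- arXiv:math-ph/9912007 — 2 statements merged into one kernel-verified Lean document; each statement's English description precedes it below -/
import Mathlib

section
/- Let U_1, U_2, ... and W_1, W_2, ... be sequences in a (possibly noncommutative) ℚ-algebra related by U_n = n·W_n - Σ_{i=1}^{n-1} W_i W_{n-i}, and define the Darboux-transformed sequence by Ũ_n = -n·W_n - Σ_{i=1}^{n-1} W_i W_{n-i}. Let ρ_n = Σ_{|p|=n} (n/(s_p s_{p'})) U_{p_1}···U_{p_l} and ρ̃_n = Σ_{|p|=n} (n/(s_p s_{p'})) Ũ_{p_1}···Ũ_{p_l} be the respective spectral residue sequences. Then ρ̃_n = -ρ_n for all n. -/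
/-- `psum L j` = the `j`-th left partial sum `s_j = p_1 + … + p_j` of a composition. -/
def psum (L : List ℕ) (j : ℕ) : ℕ := (L.take j).sum

/-- `spr L` = `s_p = s_1 s_2 ⋯ s_l`, the product of the partial sums. -/
def spr (L : List ℕ) : ℕ := ∏ j ∈ Finset.range L.length, psum L (j + 1)

/-!
Write `H_V f = zD(zD - n) f + f V` for power series over `A` (the potential acts on the right),
and let `a = 1 + a₁ z + ⋯` be the formal solution of `H_U a = 0`. Its recursion
`k (n - k) a_k = (a U)_k` can be solved for `k < n`, and expanding it over compositions shows that
the obstruction at the resonant order is `(a U)_n = n ρ_n`.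

With `E = zD - n/2`, the relations `U = zW' - W²` and `Ũ = -zW' - W²` are the factorizations
`H_U + n²/4 = (E - W)(E + W)` and `H_Ũ + n²/4 = (E + W)(E - W)`, so `H_Ũ (E + W) = (E + W) H_U`.
Hence `b = (E + W) a` satisfies `H_Ũ b = 0` below order `n` with `b₀ = -n/2`, which forces
`b_k = -(n/2) ã_k` for `k < n`; comparing the coefficients of order `n` in `H_Ũ b = (E + W) H_U a`
gives `-(n/2) · n ρ̃_n = (n/2) · n ρ_n`.
-/

open Finset PowerSeries

namespace Composition

lemma sigma_mk_eq_of_blocks_eq {k j j' : ℕ} {c : Composition (k - j)} {c' : Composition (k - j')}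
    (h : j = j') (hb : c.blocks = c'.blocks) :
    (⟨j, c⟩ : Σ i : ℕ, Composition (k - i)) = ⟨j', c'⟩ := by
  subst h
  exact congrArg _ (Composition.ext hb)

lemma sum_eq_sum_Ico_append_singleton {M : Type*} [AddCommMonoid M] {k : ℕ} (hk : 0 < k)
    (F : List ℕ → M) :
    ∑ c : Composition k, F c.blocks
      = ∑ j ∈ Ico 1 (k + 1), ∑ c : Composition (k - j), F (c.blocks ++ [j]) := by
  have hne (d : Composition k) : d.blocks ≠ [] := by simp [blocks_eq_nil]; omega
  have hsplit (d : Composition k) : d.blocks.dropLast ++ [d.blocks.getLast (hne d)] = d.blocks :=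
    List.dropLast_append_getLast (hne d)
  have hsum (d : Composition k) : d.blocks.dropLast.sum + d.blocks.getLast (hne d) = k := by
    simpa [d.blocks_sum] using congrArg List.sum (hsplit d)
  rw [sum_sigma']
  refine sum_bij'
    (fun d _ => ⟨d.blocks.getLast (hne d),
      ⟨d.blocks.dropLast, fun hi => d.blocks_pos (List.dropLast_subset _ hi),
        by have := hsum d; omega⟩⟩)
    (fun p hp => ⟨p.2.blocks ++ [p.1], ?_, ?_⟩) (fun d _ => ?_) (fun p hp => ?_)
    (fun d _ => ?_) (fun p hp => ?_) (fun d _ => ?_)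
  · simp only [mem_sigma, mem_Ico] at hp
    intro i hi
    rcases List.mem_append.mp hi with hi | hi
    · exact p.2.blocks_pos hi
    · rw [List.mem_singleton.mp hi]; omega
  · simp only [mem_sigma, mem_Ico] at hp
    simp [p.2.blocks_sum]; omega
  · have := hsum d
    have := d.blocks_pos (List.getLast_mem (hne d))
    simp only [mem_sigma, mem_Ico, mem_univ, and_true]
    omega
  · exact mem_univ _
  · exact Composition.ext (hsplit d)
  · exact sigma_mk_eq_of_blocks_eq List.getLast_concat List.dropLast_concat
  · rw [hsplit]

lemma sum_smul_prod_eq_sum_Ico {S A : Type*} [Semiring A] [SMul S A] [IsScalarTower S A A]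
    {k : ℕ} (hk : 0 < k) (g : List ℕ → S) (v : ℕ → A) :
    ∑ c : Composition k, g c.blocks • (c.blocks.map v).prod
      = ∑ j ∈ Ico 1 (k + 1),
          (∑ c : Composition (k - j), g (c.blocks ++ [j]) • (c.blocks.map v).prod) * v j := by
  rw [sum_eq_sum_Ico_append_singleton hk fun L => g L • (L.map v).prod]
  simp only [sum_mul, List.map_append, List.prod_append, List.map_singleton, List.prod_singleton,
    smul_mul_assoc]

lemma sum_zero_blocks {M : Type*} [AddCommMonoid M] (F : List ℕ → M) :
    ∑ c : Composition 0, F c.blocks = F [] := by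
  have : Subsingleton (Composition 0) :=
    ⟨fun c d => Composition.ext (by rw [c.blocks_eq_nil.2 rfl, d.blocks_eq_nil.2 rfl])⟩
  rw [Fintype.sum_subsingleton _ (ones 0)]
  simp

end Composition

section PartialSums

def solDenom (n : ℕ) (L : List ℕ) : ℕ :=
  ∏ i ∈ range L.length, psum L (i + 1) * (n - psum L (i + 1))

lemma psum_append_singleton_of_le (L : List ℕ) (j : ℕ) {i : ℕ} (h : i ≤ L.length) :
    psum (L ++ [j]) i = psum L i := by
  rw [psum, psum, List.take_append_of_le_length h]

lemma psum_append_singleton_length (L : List ℕ) (j : ℕ) :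
    psum (L ++ [j]) (L.length + 1) = L.sum + j := by
  simp [psum]

lemma psum_reverse (L : List ℕ) (i : ℕ) : psum L.reverse i = L.sum - psum L (L.length - i) := by
  have := List.sum_take_add_sum_drop L (L.length - i)
  rw [psum, psum, List.take_reverse, List.sum_reverse]
  omega

lemma spr_reverse (L : List ℕ) :
    spr L.reverse = ∏ i ∈ range L.length, (L.sum - psum L i) := by
  rw [spr, List.length_reverse, ← prod_range_reflect]
  refine prod_congr rfl fun i hi => ?_
  rw [mem_range] at hi
  rw [psum_reverse, show L.length - (L.length - 1 - i + 1) = i by omega]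

lemma prod_range_psum_append_singleton (f : ℕ → ℕ) (L : List ℕ) (j : ℕ) :
    ∏ i ∈ range L.length, f (psum (L ++ [j]) (i + 1))
      = ∏ i ∈ range L.length, f (psum L (i + 1)) :=
  prod_congr rfl fun i hi => by rw [psum_append_singleton_of_le L j (by simp at hi; omega)]

lemma solDenom_append_singleton (n : ℕ) (L : List ℕ) (j : ℕ) :
    solDenom n (L ++ [j]) = solDenom n L * ((L.sum + j) * (n - (L.sum + j))) := by
  rw [solDenom, List.length_append, List.length_singleton, prod_range_succ,
    prod_range_psum_append_singleton (fun s => s * (n - s)), psum_append_singleton_length, solDenom]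

lemma spr_mul_spr_reverse_append_singleton (L : List ℕ) (j : ℕ) :
    spr (L ++ [j]) * spr (L ++ [j]).reverse
      = (L.sum + j) * (L.sum + j) * solDenom (L.sum + j) L := by
  have hspr : spr (L ++ [j]) = spr L * (L.sum + j) := by
    rw [spr, List.length_append, List.length_singleton, prod_range_succ,
      prod_range_psum_append_singleton (fun s => s), psum_append_singleton_length, spr]
  have hrev : spr (L ++ [j]).reverse
      = (∏ i ∈ range L.length, (L.sum + j - psum L (i + 1))) * (L.sum + j) := by
    rw [spr_reverse, List.length_append, List.length_singleton, prod_range_succ',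
      prod_range_psum_append_singleton (fun s => (L ++ [j]).sum - s)]
    simp [psum]
  rw [hspr, hrev, solDenom, spr, prod_mul_distrib]
  ring

end PartialSums

namespace PowerSeries

section Semiring

variable {R : Type*} [Semiring R]

lemma coeff_mul_eq_sum_Ico {V : R⟦X⟧} (hV : coeff 0 V = 0) (f : R⟦X⟧) (k : ℕ) :
    coeff k (f * V) = ∑ j ∈ Ico 1 (k + 1), coeff (k - j) f * coeff j V := by
  rw [coeff_mul, ← Nat.sum_antidiagonal_swap]
  simp only [Prod.fst_swap, Prod.snd_swap]
  rw [Nat.sum_antidiagonal_eq_sum_range_succ (fun j i => coeff i f * coeff j V), range_eq_Ico,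
    sum_eq_sum_Ico_succ_bot k.succ_pos, hV, mul_zero, zero_add]

lemma coeff_mul_congr {V : R⟦X⟧} (hV : coeff 0 V = 0) {f g : R⟦X⟧} {k : ℕ}
    (h : ∀ i < k, coeff i f = coeff i g) : coeff k (f * V) = coeff k (g * V) := by
  simp only [coeff_mul_eq_sum_Ico hV]
  refine sum_congr rfl fun j hj => ?_
  rw [mem_Ico] at hj
  rw [h _ (by omega)]

def seriesFromOne (W : ℕ → R) : R⟦X⟧ := mk fun k => if k = 0 then 0 else W k

lemma coeff_zero_seriesFromOne (W : ℕ → R) : coeff 0 (seriesFromOne W) = 0 := by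
  simp [seriesFromOne]

lemma coeff_seriesFromOne_sq (W : ℕ → R) (k : ℕ) :
    coeff k (seriesFromOne W ^ 2) = ∑ i ∈ Ico 1 k, W i * W (k - i) := by
  rw [pow_two, coeff_mul, Nat.sum_antidiagonal_eq_sum_range_succ
    (fun i j => coeff i (seriesFromOne W) * coeff j (seriesFromOne W))]
  have hsub : Ico 1 k ⊆ range (k + 1) := fun i hi => by
    simp only [mem_Ico, mem_range] at hi ⊢
    omega
  rw [← sum_subset hsub fun i hi hi' => ?_]
  · refine sum_congr rfl fun i hi => ?_
    rw [mem_Ico] at hi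
    simp [seriesFromOne, show i ≠ 0 by omega, show k - i ≠ 0 by omega]
  · simp only [mem_Ico, mem_range, not_and, not_lt] at hi hi'
    obtain h | h : i = 0 ∨ k - i = 0 := by omega
    all_goals simp [seriesFromOne, h]

end Semiring

variable {A : Type*} [Ring A] [Algebra ℚ A]

noncomputable def eulerShift (c : ℚ) : A⟦X⟧ →ₗ[ℚ] A⟦X⟧ where
  toFun f := mk fun k => ((k : ℚ) - c) • coeff k f
  map_add' f g := by ext k; simp [smul_add]
  map_smul' q f := by ext k; simp [smul_comm q]

@[simp]
lemma coeff_eulerShift (c : ℚ) (f : A⟦X⟧) (k : ℕ) :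
    coeff k (eulerShift c f) = ((k : ℚ) - c) • coeff k f := by
  simp [eulerShift]

lemma eulerShift_mul (c : ℚ) (f g : A⟦X⟧) :
    eulerShift c (f * g) = eulerShift c f * g + f * eulerShift 0 g := by
  ext k
  simp only [map_add, coeff_eulerShift, coeff_mul, smul_sum, ← sum_add_distrib, sub_zero]
  refine sum_congr rfl fun p hp => ?_
  rw [HasAntidiagonal.mem_antidiagonal] at hp
  rw [smul_mul_assoc, mul_smul_comm, ← add_smul, ← hp]
  push_cast
  ring_nf

lemma coeff_eulerShift_zero_seriesFromOne (W : ℕ → A) (k : ℕ) :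
    coeff k (eulerShift 0 (seriesFromOne W)) = k • W k := by
  rcases k.eq_zero_or_pos with rfl | hk
  · simp
  · simp [seriesFromOne, hk.ne', Nat.cast_smul_eq_nsmul]

/-- `f ↦ zD(zD - ν) f + f V`, written through `zD - ν/2` so that the Darboux factorizations
below are identities of linear maps. -/
noncomputable def resonantOp (ν : ℚ) (V : A⟦X⟧) : A⟦X⟧ →ₗ[ℚ] A⟦X⟧ :=
  eulerShift (ν / 2) ∘ₗ eulerShift (ν / 2) - (ν / 2) ^ 2 • LinearMap.id
    + LinearMap.mulRight ℚ V

noncomputable def darbouxPlus (ν : ℚ) (w : A⟦X⟧) : A⟦X⟧ →ₗ[ℚ] A⟦X⟧ :=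
  eulerShift (ν / 2) + LinearMap.mulRight ℚ w

noncomputable def darbouxMinus (ν : ℚ) (w : A⟦X⟧) : A⟦X⟧ →ₗ[ℚ] A⟦X⟧ :=
  eulerShift (ν / 2) - LinearMap.mulRight ℚ w

lemma darbouxMinus_darbouxPlus (ν : ℚ) (w f : A⟦X⟧) :
    darbouxMinus ν w (darbouxPlus ν w f)
      = resonantOp ν (eulerShift 0 w - w ^ 2) f + (ν / 2) ^ 2 • f := by
  simp only [darbouxMinus, darbouxPlus, resonantOp, LinearMap.add_apply, LinearMap.sub_apply,
    LinearMap.comp_apply, LinearMap.smul_apply, LinearMap.id_apply, LinearMap.mulRight_apply,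
    map_add, eulerShift_mul, mul_sub, pow_two, mul_assoc]
  abel

lemma darbouxPlus_darbouxMinus (ν : ℚ) (w f : A⟦X⟧) :
    darbouxPlus ν w (darbouxMinus ν w f)
      = resonantOp ν (-eulerShift 0 w - w ^ 2) f + (ν / 2) ^ 2 • f := by
  simp only [darbouxMinus, darbouxPlus, resonantOp, LinearMap.add_apply, LinearMap.sub_apply,
    LinearMap.comp_apply, LinearMap.smul_apply, LinearMap.id_apply, LinearMap.mulRight_apply,
    map_sub, eulerShift_mul, mul_sub, mul_neg, pow_two, mul_assoc]
  abel

lemma resonantOp_darbouxPlus (ν : ℚ) (w f : A⟦X⟧) :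
    resonantOp ν (-eulerShift 0 w - w ^ 2) (darbouxPlus ν w f)
      = darbouxPlus ν w (resonantOp ν (eulerShift 0 w - w ^ 2) f) := by
  have h := darbouxPlus_darbouxMinus ν w (darbouxPlus ν w f)
  rwa [darbouxMinus_darbouxPlus, map_add, map_smul, add_left_inj, eq_comm] at h

lemma coeff_resonantOp (ν : ℚ) (V f : A⟦X⟧) (k : ℕ) :
    coeff k (resonantOp ν V f) = ((k : ℚ) * (k - ν)) • coeff k f + coeff k (f * V) := by
  simp only [resonantOp, LinearMap.add_apply, LinearMap.sub_apply, LinearMap.comp_apply,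
    LinearMap.smul_apply, LinearMap.id_apply, LinearMap.mulRight_apply, map_add, map_sub,
    coeff_eulerShift, coeff_smul, smul_smul]
  module

lemma coeff_darbouxPlus_of_forall_lt {w f : A⟦X⟧} (hw : coeff 0 w = 0) (ν : ℚ) {k : ℕ}
    (hf : ∀ i < k, coeff i f = 0) :
    coeff k (darbouxPlus ν w f) = ((k : ℚ) - ν / 2) • coeff k f := by
  have : coeff k (f * w) = 0 := by
    simpa using coeff_mul_congr hw (g := 0) (by simpa using hf)
  simp [darbouxPlus, this]

lemma coeff_eq_of_coeff_resonantOp_eq_zero {n : ℕ} {V f g : A⟦X⟧} (hV : coeff 0 V = 0)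
    (hf : ∀ k < n, coeff k (resonantOp n V f) = 0)
    (hg : ∀ k < n, coeff k (resonantOp n V g) = 0)
    (h0 : coeff 0 f = coeff 0 g) {k : ℕ} (hk : k < n) : coeff k f = coeff k g := by
  induction k using Nat.strong_induction_on with
  | _ k ih =>
    rcases k.eq_zero_or_pos with rfl | hk0
    · exact h0
    have hD : (k : ℚ) * (k - n) ≠ 0 := by
      have : (k : ℚ) < n := by exact_mod_cast hk
      have : (0 : ℚ) < k := by exact_mod_cast hk0
      nlinarith
    have hfg := (hf k hk).trans (hg k hk).symm
    rw [coeff_resonantOp, coeff_resonantOp,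
      coeff_mul_congr hV fun i hi => ih i hi (hi.trans hk), add_left_inj] at hfg
    exact smul_right_injective A hD hfg

/-- `a_k = ∑_{|p| = k} V_{p_1} ⋯ V_{p_l} / ∏_{j ≤ l} s_j (n - s_j)`. For `k ≥ n` a factor
may vanish and `0⁻¹ = 0` makes the coefficient junk; only coefficients below `n` are used. -/
noncomputable def formalSolution (n : ℕ) (V : A⟦X⟧) : A⟦X⟧ :=
  mk fun k => ∑ c : Composition k,
    ((solDenom n c.blocks : ℚ))⁻¹ • (c.blocks.map fun j => coeff j V).prod

lemma coeff_zero_formalSolution (n : ℕ) (V : A⟦X⟧) : coeff 0 (formalSolution n V) = 1 := by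
  rw [formalSolution, coeff_mk, Composition.sum_zero_blocks
    fun L => ((solDenom n L : ℚ))⁻¹ • (L.map fun j => coeff j V).prod]
  simp [solDenom]

lemma coeff_formalSolution_of_pos (n : ℕ) (V : A⟦X⟧) {k : ℕ} (hk : 0 < k) :
    coeff k (formalSolution n V) = (((k * (n - k) : ℕ) : ℚ))⁻¹ •
      ∑ j ∈ Ico 1 (k + 1), coeff (k - j) (formalSolution n V) * coeff j V := by
  rw [formalSolution, coeff_mk, Composition.sum_smul_prod_eq_sum_Ico hk
    (fun L => ((solDenom n L : ℚ))⁻¹) (fun j => coeff j V), smul_sum]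
  refine sum_congr rfl fun j hj => ?_
  rw [mem_Ico] at hj
  rw [coeff_mk, ← smul_mul_assoc, smul_sum]
  congr 1
  refine sum_congr rfl fun c _ => ?_
  rw [smul_smul, solDenom_append_singleton, c.blocks_sum, Nat.sub_add_cancel (by omega),
    Nat.cast_mul, mul_inv, mul_comm]

lemma coeff_resonantOp_formalSolution {n : ℕ} {V : A⟦X⟧} (hV : coeff 0 V = 0) {k : ℕ}
    (hk : k < n) :
    coeff k (resonantOp n V (formalSolution n V)) = 0 := by
  rw [coeff_resonantOp]
  rcases k.eq_zero_or_pos with rfl | hk0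
  · simp [coeff_mul_eq_sum_Ico hV]
  have hD : ((k : ℚ) * (k - n)) * (((k * (n - k) : ℕ) : ℚ))⁻¹ = -1 := by
    have : (k : ℚ) ≠ 0 := by positivity
    have : (n : ℚ) - k ≠ 0 := sub_ne_zero.2 (by exact_mod_cast hk.ne')
    rw [Nat.cast_mul, Nat.cast_sub hk.le]
    field_simp
    ring
  rw [coeff_formalSolution_of_pos n V hk0, ← coeff_mul_eq_sum_Ico hV, smul_smul, hD, neg_one_smul,
    neg_add_cancel]

lemma coeff_formalSolution_mul_darboux_eq_neg {w : A⟦X⟧} (hw : coeff 0 w = 0) {n : ℕ}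
    (hn : 0 < n) :
    coeff n (formalSolution n (-eulerShift 0 w - w ^ 2) * (-eulerShift 0 w - w ^ 2))
      = -coeff n (formalSolution n (eulerShift 0 w - w ^ 2) * (eulerShift 0 w - w ^ 2)) := by
  set U := eulerShift 0 w - w ^ 2
  set Ut := -eulerShift 0 w - w ^ 2
  have hw2 : coeff 0 (w ^ 2) = 0 := by simp [pow_two, coeff_mul_eq_sum_Ico hw]
  have hU0 : coeff 0 U = 0 := by
    simp only [U, map_sub, coeff_eulerShift, hw, hw2, smul_zero, sub_zero]
  have hUt0 : coeff 0 Ut = 0 := by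
    simp only [Ut, map_sub, map_neg, coeff_eulerShift, hw, hw2, smul_zero, neg_zero, sub_zero]
  set a := formalSolution n U
  have ha : ∀ k < n, coeff k (resonantOp n U a) = 0 :=
    fun _ => coeff_resonantOp_formalSolution hU0
  set b := darbouxPlus n w a
  have hb : ∀ k ≤ n,
      coeff k (resonantOp n Ut b) = ((k : ℚ) - n / 2) • coeff k (resonantOp n U a) := by
    intro k hk
    rw [resonantOp_darbouxPlus]
    exact coeff_darbouxPlus_of_forall_lt hw _ fun i hi => ha i (by omega)
  set bt := (-(n : ℚ) / 2) • formalSolution n Ut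
  have hb0 : coeff 0 b = coeff 0 bt := by
    rw [coeff_darbouxPlus_of_forall_lt hw _ fun i hi => absurd hi i.not_lt_zero, coeff_smul,
      coeff_zero_formalSolution, coeff_zero_formalSolution]
    norm_num [neg_div]
  have hbt : ∀ k < n, coeff k (resonantOp n Ut bt) = 0 := fun k hk => by
    rw [map_smul, coeff_smul, coeff_resonantOp_formalSolution hUt0 hk, smul_zero]
  have hb_eq : ∀ k < n, coeff k b = coeff k bt := fun _ => coeff_eq_of_coeff_resonantOp_eq_zero
    hUt0 (fun k hk => by rw [hb k hk.le, ha k hk, smul_zero]) hbt hb0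
  have hcrit := hb n le_rfl
  rw [coeff_resonantOp, coeff_resonantOp, coeff_mul_congr hUt0 hb_eq] at hcrit
  rw [sub_self, mul_zero, zero_smul, zero_add, zero_smul, zero_add, smul_mul_assoc, coeff_smul,
    show (n : ℚ) - n / 2 = n / 2 by ring, neg_div, neg_smul, neg_eq_iff_eq_neg, ← smul_neg]
    at hcrit
  exact smul_right_injective A (by positivity) hcrit

lemma div_spr_mul_spr_reverse_append_singleton {n : ℕ} (hn : 0 < n) {L : List ℕ} {j : ℕ}
    (hL : L.sum + j = n) :
    (n : ℚ) / ((spr (L ++ [j]) : ℚ) * spr (L ++ [j]).reverse)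
      = (n : ℚ)⁻¹ * (solDenom n L : ℚ)⁻¹ := by
  rw [← Nat.cast_mul, spr_mul_spr_reverse_append_singleton, hL]
  push_cast
  rw [div_mul_eq_div_div, div_mul_cancel_left₀ (by positivity), div_eq_inv_mul, mul_comm]

lemma spectral_residue_eq_coeff_formalSolution_mul {n : ℕ} (hn : 0 < n) {v : ℕ → A}
    (hv : v 0 = 0) :
    ∑ c : Composition n, ((n : ℚ) / ((spr c.blocks : ℚ) * spr c.blocks.reverse)) •
      (c.blocks.map v).prod = (n : ℚ)⁻¹ • coeff n (formalSolution n (mk v) * mk v) := by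
  rw [Composition.sum_smul_prod_eq_sum_Ico hn
    (fun L => (n : ℚ) / ((spr L : ℚ) * spr L.reverse)) v,
    coeff_mul_eq_sum_Ico (by simpa using hv), smul_sum]
  refine sum_congr rfl fun j hj => ?_
  rw [mem_Ico] at hj
  simp only [formalSolution, coeff_mk, sum_mul, smul_sum]
  refine sum_congr rfl fun c _ => ?_
  rw [div_spr_mul_spr_reverse_append_singleton hn (by rw [c.blocks_sum]; omega), mul_smul,
    smul_mul_assoc]

end PowerSeries

/-- Theorem 3: the Darboux transformation negates spectral residues.  If
`U_n = n W_n - Σ_{i=1}^{n-1} W_i W_{n-i}` and `Ũ_n = -n W_n - Σ_{i=1}^{n-1} W_i W_{n-i}`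
(the coefficient form of `U = zW' - W²`, `Ũ = -zW' - W²`), and `ρ`, `ρ̃` are the spectral
residue sequences of `U`, `Ũ`, then `ρ̃_n = -ρ_n`. -/
theorem darboux_negates_spectral_residues {A : Type*} [Ring A] [Algebra ℚ A]
    (U Ut W ρ ρt : ℕ → A)
    (hU : ∀ n : ℕ, U n = n • W n - ∑ i ∈ Finset.Ico 1 n, W i * W (n - i))
    (hUt : ∀ n : ℕ, Ut n = -(n • W n) - ∑ i ∈ Finset.Ico 1 n, W i * W (n - i))
    (hρ : ∀ n : ℕ, ρ n = ∑ c : Composition n,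
      ((n : ℚ) / ((spr c.blocks : ℚ) * spr c.blocks.reverse)) • (c.blocks.map U).prod)
    (hρt : ∀ n : ℕ, ρt n = ∑ c : Composition n,
      ((n : ℚ) / ((spr c.blocks : ℚ) * spr c.blocks.reverse)) • (c.blocks.map Ut).prod)
    (n : ℕ) (hn : 0 < n) :
    ρt n = -ρ n := by
  have hUw : mk U = eulerShift 0 (seriesFromOne W) - seriesFromOne W ^ 2 := by
    ext k
    rw [coeff_mk, hU, map_sub, coeff_eulerShift_zero_seriesFromOne, coeff_seriesFromOne_sq]
  have hUtw : mk Ut = -eulerShift 0 (seriesFromOne W) - seriesFromOne W ^ 2 := by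
    ext k
    rw [coeff_mk, hUt, map_sub, map_neg, coeff_eulerShift_zero_seriesFromOne,
      coeff_seriesFromOne_sq]
  rw [hρ, hρt, spectral_residue_eq_coeff_formalSolution_mul hn (by rw [hUt]; simp),
    spectral_residue_eq_coeff_formalSolution_mul hn (by rw [hU]; simp), hUw, hUtw,
    coeff_formalSolution_mul_darboux_eq_neg (coeff_zero_seriesFromOne W) hn, smul_neg]
end

section
/- Let W_1, W_2, ... be a sequence in a (possibly noncommutative) ℚ-algebra, and for each composition p = (p_1,...,p_l) of n with l odd define the rational function of ν given by the ordered product (W_{p_l}/(ν-n))···(W_{p_4}/(-s_4))(W_{p_3}/(ν-s_3))(W_{p_2}/(-s_2))(W_{p_1}/(ν-s_1)), where odd-indexed partial sums contribute factors 1/(ν-s_j) and even-indexed partial sums contribute factors 1/(-s_j). Then the residue at ν = n of the sum δ_n of these expressions over all odd-length compositions of n equals Σ_{|p|=n, ℓ(p) odd} (-1)^{(ℓ(p)-1)/2} (1/(q_p q_{p'})) W_{p_1}···W_{p_l}, where q_p = s_2 s_4 ··· s_{l-1}. -/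
/-- For a composition of odd length `2k+1`, `q_p = s_2 s_4 ⋯ s_{2k}` (equal to `1` when `k = 0`). -/
def qpr (L : List ℕ) : ℕ := ∏ j ∈ Finset.range ((L.length - 1) / 2), psum L (2 * j + 2)

open Filter Topology Finset

theorem Finset.prod_range_two_mul {M : Type*} [CommMonoid M] (f : ℕ → M) (k : ℕ) :
    ∏ j ∈ range (2 * k), f j = ∏ i ∈ range k, (f (2 * i) * f (2 * i + 1)) := by
  induction k with
  | zero => simp
  | succ k ih =>
    rw [show 2 * (k + 1) = 2 * k + 1 + 1 by ring, prod_range_succ, prod_range_succ, ih,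
      prod_range_succ, mul_assoc]

section PartialSums

variable {L : List ℕ}

lemma psum_length (L : List ℕ) : psum L L.length = L.sum := by
  simp [psum]

lemma psum_lt_sum (hpos : ∀ x ∈ L, 0 < x) {j : ℕ} (hj : j < L.length) : psum L j < L.sum := by
  obtain ⟨x, hx⟩ := List.exists_mem_of_ne_nil (L.drop j)
    (List.ne_nil_of_length_pos (by rw [List.length_drop]; omega))
  have := (hpos x (List.mem_of_mem_drop hx)).trans_le (List.le_sum_of_mem hx)
  have : psum L j + (L.drop j).sum = L.sum := List.sum_take_add_sum_drop L j
  omega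

lemma psum_reverse_add_psum (L : List ℕ) (j : ℕ) :
    psum L.reverse j + psum L (L.length - j) = L.sum := by
  rw [psum, psum, List.take_reverse, List.sum_reverse, add_comm, List.sum_take_add_sum_drop]

lemma qpr_of_length_eq {k : ℕ} (hlen : L.length = 2 * k + 1) :
    qpr L = ∏ i ∈ range k, psum L (2 * i + 2) := by
  rw [qpr, hlen, show (2 * k + 1 - 1) / 2 = k by omega]

lemma qpr_reverse_of_length_eq {R : Type*} [CommRing R] {k : ℕ} (hlen : L.length = 2 * k + 1) :
    (qpr L.reverse : R) = ∏ i ∈ range k, ((L.sum : R) - psum L (2 * i + 1)) := by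
  rw [qpr_of_length_eq (by rwa [List.length_reverse]), Nat.cast_prod,
    ← prod_range_reflect (fun i => (L.sum : R) - psum L (2 * i + 1)) k]
  refine prod_congr rfl fun i hi => ?_
  have hi : i < k := mem_range.1 hi
  have h := psum_reverse_add_psum L (2 * i + 2)
  rw [hlen, show 2 * k + 1 - (2 * i + 2) = 2 * (k - 1 - i) + 1 by omega] at h
  rw [eq_sub_iff_add_eq, ← Nat.cast_add, h]

end PartialSums

/-- The factor of the `δ_n`-summand of `L` attached to the partial sum `s_{j+1}`. -/
noncomputable def deltaFactor (L : List ℕ) (ν : ℝ) (j : ℕ) : ℝ :=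
  if j % 2 = 0 then (ν - (psum L (j + 1) : ℝ))⁻¹ else (-(psum L (j + 1) : ℝ))⁻¹

lemma prod_deltaFactor_sum {L : List ℕ} {k : ℕ} (hlen : L.length = 2 * k + 1) :
    ∏ j ∈ range (2 * k), deltaFactor L L.sum j =
      (-1) ^ k / ((qpr L.reverse : ℝ) * qpr L) := by
  have hpair : ∀ i ∈ range k, deltaFactor L L.sum (2 * i) * deltaFactor L L.sum (2 * i + 1) =
      -1 * (((L.sum : ℝ) - psum L (2 * i + 1)) * psum L (2 * i + 2))⁻¹ := fun i _ => by
    simp only [deltaFactor, Nat.mul_mod_right, Nat.mul_add_mod, if_true, Nat.reduceMod,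
      one_ne_zero, if_false, mul_inv, inv_neg]
    ring
  rw [prod_range_two_mul, prod_congr rfl hpair, prod_mul_distrib, prod_const, card_range,
    prod_inv_distrib, prod_mul_distrib, qpr_reverse_of_length_eq hlen, qpr_of_length_eq hlen,
    Nat.cast_prod, div_eq_mul_inv]

lemma tendsto_residue_deltaFactor {L : List ℕ} {k : ℕ} (hpos : ∀ x ∈ L, 0 < x)
    (hlen : L.length = 2 * k + 1) :
    Tendsto (fun ν : ℝ => (ν - L.sum) * ∏ j ∈ range L.length, deltaFactor L ν j)
      (𝓝[≠] (L.sum : ℝ)) (𝓝 (∏ j ∈ range (2 * k), deltaFactor L L.sum j)) := by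
  have hcont : Tendsto (fun ν => ∏ j ∈ range (2 * k), deltaFactor L ν j) (𝓝 (L.sum : ℝ))
      (𝓝 (∏ j ∈ range (2 * k), deltaFactor L L.sum j)) := by
    refine tendsto_finsetProd _ fun j hj => ContinuousAt.tendsto ?_
    have hj : j + 1 < L.length := by rw [mem_range] at hj; omega
    unfold deltaFactor
    split_ifs
    · have : (psum L (j + 1) : ℝ) < L.sum := by exact_mod_cast psum_lt_sum hpos hj
      exact (continuousAt_id.sub continuousAt_const).inv₀ (sub_ne_zero.2 this.ne')
    · exact continuousAt_const
  have hcancel : ∀ ν ∈ ({(L.sum : ℝ)}ᶜ : Set ℝ), ∏ j ∈ range (2 * k), deltaFactor L ν j =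
      (ν - L.sum) * ∏ j ∈ range L.length, deltaFactor L ν j := fun ν hν => by
    have hlast : deltaFactor L ν (2 * k) = (ν - L.sum)⁻¹ := by
      rw [deltaFactor, if_pos (by omega), ← hlen, psum_length]
    rw [hlen, prod_range_succ, hlast, mul_left_comm, mul_inv_cancel₀ (sub_ne_zero.2 hν),
      mul_one]
  exact (hcont.mono_left nhdsWithin_le_nhds).congr'
    (eventuallyEq_of_mem self_mem_nhdsWithin hcancel)

lemma residue_deltaFactor_eq {L : List ℕ} {n k : ℕ} (hpos : ∀ x ∈ L, 0 < x) (hsum : L.sum = n)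
    (hlen : L.length = 2 * k + 1) {x : ℝ}
    (hx : Tendsto (fun ν : ℝ => (ν - n) * ∏ j ∈ range L.length, deltaFactor L ν j)
      (𝓝[≠] (n : ℝ)) (𝓝 x)) :
    x = (-1) ^ k / ((qpr L.reverse : ℝ) * qpr L) := by
  subst hsum
  rw [tendsto_nhds_unique hx (tendsto_residue_deltaFactor hpos hlen), prod_deltaFactor_sum hlen]

theorem residue_of_delta_general {A : Type*} [Ring A] [Algebra ℚ A] (W : ℕ → A)
    (n : ℕ) (r : Composition n → ℚ)
    (hr : ∀ c : Composition n, Odd c.length →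
      Filter.Tendsto
        (fun ν : ℝ => (ν - (n : ℝ)) * ∏ j ∈ Finset.range c.length,
          (if j % 2 = 0 then (ν - (psum c.blocks (j + 1) : ℝ))⁻¹
           else (-(psum c.blocks (j + 1) : ℝ))⁻¹))
        (nhdsWithin (n : ℝ) {(n : ℝ)}ᶜ) (nhds ((r c : ℚ) : ℝ))) :
    (∑ c : Composition n,
        if Odd c.length then (r c) • (c.blocks.reverse.map W).prod else 0) =
      ∑ c : Composition n,
        if Odd c.length then
          ((-1 : ℚ) ^ ((c.length - 1) / 2) / ((qpr c.blocks : ℚ) * qpr c.blocks.reverse)) •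
            (c.blocks.map W).prod
        else 0 := by
  rw [← Composition.reverse_bijective.sum_comp]
  refine sum_congr rfl fun c _ => ?_
  have hlen : c.reverse.length = c.length := by simp [Composition.length]
  rw [hlen]
  split_ifs with hodd
  · obtain ⟨k, hk⟩ := hodd
    have hk' : c.reverse.length = 2 * k + 1 := hlen.trans hk
    have hres := residue_deltaFactor_eq (fun _ h => c.reverse.blocks_pos h)
      c.reverse.blocks_sum hk' (hr c.reverse ⟨k, hk'⟩)
    rw [Composition.reverse_blocks, List.reverse_reverse] at hres
    have hr' : r c.reverse = (-1) ^ k / ((qpr c.blocks : ℚ) * qpr c.blocks.reverse) := by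
      exact_mod_cast hres
    rw [hr', hk, show (2 * k + 1 - 1) / 2 = k by omega, Composition.reverse_blocks,
      List.reverse_reverse]
  · rfl

/-- The residue at `ν = n` of
`δ_n = Σ_{|p|=n, ℓ(p) odd} (W_{p_l}/(ν-n))⋯(W_{p_3}/(ν-s_3))(W_{p_2}/(-s_2))(W_{p_1}/(ν-s_1))`
— where odd-indexed partial sums contribute factors `1/(ν-s_j)` and even-indexed ones
contribute `1/(-s_j)`, and the residue of each scalar coefficient is the limit `r c` of
`(ν-n)` times the coefficient as `ν → n` — equals
`Σ_{|p|=n, ℓ(p) odd} (-1)^{(ℓ(p)-1)/2} (1/(q_p q_{p'})) W_{p_1}⋯W_{p_l}`. -/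
theorem residue_of_delta {A : Type*} [Ring A] [Algebra ℚ A] (W : ℕ → A)
    (n : ℕ) (hn : 0 < n) (r : Composition n → ℚ)
    (hr : ∀ c : Composition n, Odd c.length →
      Filter.Tendsto
        (fun ν : ℝ => (ν - (n : ℝ)) * ∏ j ∈ Finset.range c.length,
          (if j % 2 = 0 then (ν - (psum c.blocks (j + 1) : ℝ))⁻¹
           else (-(psum c.blocks (j + 1) : ℝ))⁻¹))
        (nhdsWithin (n : ℝ) {(n : ℝ)}ᶜ) (nhds ((r c : ℚ) : ℝ))) :
    (∑ c : Composition n,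
        if Odd c.length then (r c) • (c.blocks.reverse.map W).prod else 0) =
      ∑ c : Composition n,
        if Odd c.length then
          ((-1 : ℚ) ^ ((c.length - 1) / 2) / ((qpr c.blocks : ℚ) * qpr c.blocks.reverse)) •
            (c.blocks.map W).prod
        else 0 :=
  residue_of_delta_general W n r hr
end
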